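/- For the merge operation on label-indexed branching trees (merging branching nodes by taking the union of their label maps and recursively merging on common labels, and requiring equality elsewhere), merge B B' = B' whenever every branch structure of B is included in B' (i.e., the 'branch-inclusion' preorder B ⊑ B' holds); consequently ⊑ is a partial order on trees up to the equivalence generated by merge, with merge B B' being the least upper bound of B and B' when it exists. -/

import Mathlib

/-!
`merge A B = some B` unfolds at non-branching nodes to the same relation between corresponding
children, and at branching nodes to the label-wise relation `(f l).pmerge merge (g l) = g l`.
Reflexivity, transitivity, antisymmetry and the join property therefore all follow by induction
on the first tree: at a branching node each reduces to the corresponding fact about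
`Option.pmerge`, with the induction hypothesis supplying it for the subtrees.
-/

/-- Behaviour trees: non-branching constructor nodes with a list of children,
and branching nodes carrying a (label-indexed) map from labels to subtrees. -/
inductive BT (C L : Type) where
  | node : C → List (BT C L) → BT C L
  | branch : (L → Option (BT C L)) → BT C L

namespace Option

variable {α : Type*} (m : α → α → Option α)

def pmerge : Option α → Option α → Option α
  | some a, some b => m a b
  | some a, none => some a
  | none, some b => some b
  | none, none => none

variable {m} {x y z : Option α}

theorem pmerge_eq_right_iff : pmerge m x y = y ↔ ∀ a ∈ x, ∃ b ∈ y, m a b = some b := by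
  cases x <;> cases y <;> simp [pmerge]

theorem pmerge_self (h : ∀ a ∈ x, m a a = some a) : pmerge m x x = x := by
  cases x <;> simp_all [pmerge]

theorem pmerge_trans (h : ∀ a ∈ x, ∀ b c, m a b = some b → m b c = some c → m a c = some c)
    (hxy : pmerge m x y = y) (hyz : pmerge m y z = z) : pmerge m x z = z := by
  rw [pmerge_eq_right_iff] at *
  intro a ha
  obtain ⟨b, hb, hab⟩ := hxy a ha
  obtain ⟨c, hc, hbc⟩ := hyz b hb
  exact ⟨c, hc, h a ha b c hab hbc⟩

theorem eq_of_pmerge_eq_right (h : ∀ a ∈ x, ∀ b, m a b = some b → m b a = some a → a = b)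
    (hxy : pmerge m x y = y) (hyx : pmerge m y x = x) : x = y := by
  rw [pmerge_eq_right_iff] at hxy hyx
  rcases x with _ | a
  · rcases y with _ | b
    · rfl
    · obtain ⟨a, ha, -⟩ := hyx b rfl
      cases ha
  · obtain ⟨b, rfl, hab⟩ := hxy a rfl
    obtain ⟨a', ha', hba⟩ := hyx b rfl
    cases ha'
    rw [h a rfl b hab hba]

theorem pmerge_absorb (hx : ∀ a ∈ x, m a a = some a) (hy : ∀ b ∈ y, m b b = some b)
    (hdef : ∀ a ∈ x, ∀ b ∈ y, (m a b).isSome)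
    (h : ∀ a ∈ x, ∀ b ∈ y, ∀ c, m a b = some c → m a c = some c ∧ m b c = some c) :
    pmerge m x (pmerge m x y) = pmerge m x y ∧ pmerge m y (pmerge m x y) = pmerge m x y := by
  rcases x with _ | a <;> rcases y with _ | b
  · exact ⟨rfl, rfl⟩
  · exact ⟨rfl, hy b rfl⟩
  · exact ⟨hx a rfl, rfl⟩
  · obtain ⟨c, hc⟩ := isSome_iff_exists.1 (hdef a rfl b rfl)
    simp only [pmerge, hc]
    exact h a rfl b rfl c hc

theorem pmerge_lub
    (h : ∀ a ∈ x, ∀ b ∈ y, ∀ c d, m a b = some c → m a d = some d → m b d = some d → m c d = some d)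
    (hxz : pmerge m x z = z) (hyz : pmerge m y z = z) : pmerge m (pmerge m x y) z = z := by
  rw [pmerge_eq_right_iff] at *
  intro c hc
  rcases x with _ | a <;> rcases y with _ | b
  · cases hc
  · cases hc
    exact hyz _ rfl
  · cases hc
    exact hxz _ rfl
  · obtain ⟨d, hd, had⟩ := hxz a rfl
    obtain ⟨d', hd', hbd⟩ := hyz b rfl
    cases hd.symm.trans hd'
    exact ⟨d, hd, h a rfl b rfl c d hc had hbd⟩

end Option

namespace BT

variable {C L : Type}

theorem subtree_induction {P : BT C L → Prop}
    (node : ∀ c ts, (∀ t ∈ ts, P t) → P (node c ts))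
    (branch : ∀ f, (∀ l, ∀ t ∈ f l, P t) → P (branch f)) (b : BT C L) : P b :=
  BT.rec (motive_1 := P) (motive_2 := fun ts => ∀ t ∈ ts, P t)
    (motive_3 := fun o => ∀ t, o = some t → P t)
    node (fun f ih => branch f fun l => ih l)
    (fun _ h => absurd h List.not_mem_nil)
    (fun _ _ ihd itl t ht => (List.mem_cons.1 ht).elim (· ▸ ihd) (itl t))
    (fun _ h => by cases h)
    (fun _ ih _ h => Option.some_inj.1 h ▸ ih)
    b

open Classical in
structure IsMerge (merge : BT C L → BT C L → Option (BT C L)) : Prop where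
  node_node : ∀ (c c' : C) (ts ts' : List (BT C L)) (r : BT C L),
    merge (.node c ts) (.node c' ts') = some r ↔
      (c = c' ∧ ∃ us : List (BT C L), r = .node c us ∧
        us.length = ts.length ∧ ts'.length = ts.length ∧
        ∀ (i : ℕ) (h1 : i < ts.length) (h2 : i < ts'.length) (h3 : i < us.length),
          merge (ts.get ⟨i, h1⟩) (ts'.get ⟨i, h2⟩) = some (us.get ⟨i, h3⟩))
  node_branch : ∀ c ts f, merge (.node c ts) (.branch f) = none
  branch_node : ∀ c ts f, merge (.branch f) (.node c ts) = none
  branch_branch : ∀ f g : L → Option (BT C L),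
    merge (.branch f) (.branch g) =
      if ∀ (l : L) (a b : BT C L), f l = some a → g l = some b → (merge a b).isSome = true
      then some (.branch fun l => (f l).pmerge merge (g l))
      else none

namespace IsMerge

variable {merge : BT C L → BT C L → Option (BT C L)}

theorem merge_node_eq_right_iff (hm : IsMerge merge) {c c' : C} {ts ts' : List (BT C L)} :
    merge (.node c ts) (.node c' ts') = some (.node c' ts') ↔
      c = c' ∧ ts'.length = ts.length ∧
        ∀ (i : ℕ) (h : i < ts.length) (h' : i < ts'.length), merge ts[i] ts'[i] = some ts'[i] := by
  simp only [hm.node_node, List.get_eq_getElem]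
  constructor
  · rintro ⟨rfl, us, hus, -, hlen, hmerge⟩
    cases hus
    exact ⟨rfl, hlen, fun i h h' => hmerge i h h' h'⟩
  · rintro ⟨rfl, hlen, hmerge⟩
    exact ⟨rfl, ts', rfl, hlen, hlen, fun i h h' _ => hmerge i h h'⟩

theorem merge_branch_eq_right_iff (hm : IsMerge merge) {f g : L → Option (BT C L)} :
    merge (.branch f) (.branch g) = some (.branch g) ↔ ∀ l, (f l).pmerge merge (g l) = g l := by
  rw [hm.branch_branch]
  split_ifs with hdef
  · simp [funext_iff]
  · refine iff_of_false (by simp) fun h => hdef fun l a b ha hb => ?_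
    obtain ⟨b', hb', hab⟩ := Option.pmerge_eq_right_iff.1 (h l) a ha
    cases hb.symm.trans hb'
    simp [hab]

theorem eq_branch_of_merge_branch_eq_some (hm : IsMerge merge) {f g : L → Option (BT C L)}
    {J : BT C L} (h : merge (.branch f) (.branch g) = some J) :
    (∀ l, ∀ a ∈ f l, ∀ b ∈ g l, (merge a b).isSome) ∧
      J = .branch fun l => (f l).pmerge merge (g l) := by
  rw [hm.branch_branch] at h
  split_ifs at h with hdef
  exact ⟨fun l a ha b hb => hdef l a b ha hb, (Option.some_inj.1 h).symm⟩

theorem merge_self (hm : IsMerge merge) (B : BT C L) : merge B B = some B := by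
  induction B using subtree_induction with
  | node c ts ih =>
    exact hm.merge_node_eq_right_iff.2 ⟨rfl, rfl, fun i h _ => ih _ (List.getElem_mem h)⟩
  | branch f ih =>
    exact hm.merge_branch_eq_right_iff.2 fun l => Option.pmerge_self (ih l)

theorem merge_trans (hm : IsMerge merge) {A B D : BT C L} (hAB : merge A B = some B)
    (hBD : merge B D = some D) : merge A D = some D := by
  induction A using subtree_induction generalizing B D with
  | node c ts ih =>
    cases B with
    | branch g => simp [hm.node_branch] at hAB
    | node c' ts' => ?_
    cases D with
    | branch h => simp [hm.node_branch] at hBD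
    | node c'' ts'' => ?_
    obtain ⟨rfl, hlen, hAB⟩ := hm.merge_node_eq_right_iff.1 hAB
    obtain ⟨rfl, hlen', hBD⟩ := hm.merge_node_eq_right_iff.1 hBD
    refine hm.merge_node_eq_right_iff.2 ⟨rfl, by omega, fun i h h'' => ?_⟩
    exact ih _ (List.getElem_mem h) (hAB i h (by omega)) (hBD i (by omega) h'')
  | branch f ih =>
    cases B with
    | node c' ts' => simp [hm.branch_node] at hAB
    | branch g => ?_
    cases D with
    | node c'' ts'' => simp [hm.branch_node] at hBD
    | branch h => ?_
    have hAB := hm.merge_branch_eq_right_iff.1 hAB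
    have hBD := hm.merge_branch_eq_right_iff.1 hBD
    exact hm.merge_branch_eq_right_iff.2 fun l =>
      Option.pmerge_trans (fun a ha _ _ => ih l a ha) (hAB l) (hBD l)

theorem eq_of_merge_eq_right (hm : IsMerge merge) {A B : BT C L} (hAB : merge A B = some B)
    (hBA : merge B A = some A) : A = B := by
  induction A using subtree_induction generalizing B with
  | node c ts ih =>
    cases B with
    | branch g => simp [hm.node_branch] at hAB
    | node c' ts' => ?_
    obtain ⟨rfl, hlen, hAB⟩ := hm.merge_node_eq_right_iff.1 hAB
    obtain ⟨-, -, hBA⟩ := hm.merge_node_eq_right_iff.1 hBA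
    congr 1
    exact List.ext_getElem hlen.symm fun i h h' =>
      ih _ (List.getElem_mem h) (hAB i h h') (hBA i h' h)
  | branch f ih =>
    cases B with
    | node c' ts' => simp [hm.branch_node] at hAB
    | branch g => ?_
    have hAB := hm.merge_branch_eq_right_iff.1 hAB
    have hBA := hm.merge_branch_eq_right_iff.1 hBA
    exact congrArg _ <| funext fun l =>
      Option.eq_of_pmerge_eq_right (fun a ha _ => ih l a ha) (hAB l) (hBA l)

theorem merge_left_and_right_eq_of_merge_eq_some (hm : IsMerge merge) {A B J : BT C L}
    (h : merge A B = some J) : merge A J = some J ∧ merge B J = some J := by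
  induction A using subtree_induction generalizing B J with
  | node c ts ih =>
    cases B with
    | branch g => simp [hm.node_branch] at h
    | node c' ts' => ?_
    obtain ⟨rfl, us, rfl, hlen, hlen', h⟩ := (hm.node_node _ _ _ _ _).1 h
    simp only [List.get_eq_getElem] at h
    refine ⟨hm.merge_node_eq_right_iff.2 ⟨rfl, hlen, fun i hi hi' => ?_⟩,
      hm.merge_node_eq_right_iff.2 ⟨rfl, by omega, fun i hi hi' => ?_⟩⟩
    · exact (ih _ (List.getElem_mem hi) (h i hi (by omega) hi')).1
    · exact (ih _ (List.getElem_mem (by omega)) (h i (by omega) hi hi')).2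
  | branch f ih =>
    cases B with
    | node c' ts' => simp [hm.branch_node] at h
    | branch g => ?_
    obtain ⟨hdef, rfl⟩ := hm.eq_branch_of_merge_branch_eq_some h
    have hlabel l := Option.pmerge_absorb (fun a _ => hm.merge_self a) (fun b _ => hm.merge_self b)
      (hdef l) (fun a ha _ _ _ => ih l a ha)
    exact ⟨hm.merge_branch_eq_right_iff.2 fun l => (hlabel l).1,
      hm.merge_branch_eq_right_iff.2 fun l => (hlabel l).2⟩

theorem merge_eq_right_of_merge_eq_some (hm : IsMerge merge) {A B J D : BT C L}
    (h : merge A B = some J) (hAD : merge A D = some D) (hBD : merge B D = some D) :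
    merge J D = some D := by
  induction A using subtree_induction generalizing B J D with
  | node c ts ih =>
    cases B with
    | branch g => simp [hm.node_branch] at h
    | node c' ts' => ?_
    cases D with
    | branch d => simp [hm.node_branch] at hAD
    | node c'' ds => ?_
    obtain ⟨rfl, us, rfl, hlen, hlen', h⟩ := (hm.node_node _ _ _ _ _).1 h
    simp only [List.get_eq_getElem] at h
    obtain ⟨rfl, hlenD, hAD⟩ := hm.merge_node_eq_right_iff.1 hAD
    obtain ⟨-, -, hBD⟩ := hm.merge_node_eq_right_iff.1 hBD
    refine hm.merge_node_eq_right_iff.2 ⟨rfl, by omega, fun i hi hi' => ?_⟩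
    exact ih _ (List.getElem_mem (by omega)) (h i (by omega) (by omega) hi)
      (hAD i (by omega) hi') (hBD i (by omega) hi')
  | branch f ih =>
    cases B with
    | node c' ts' => simp [hm.branch_node] at h
    | branch g => ?_
    cases D with
    | node c'' ds => simp [hm.branch_node] at hAD
    | branch d => ?_
    obtain ⟨-, rfl⟩ := hm.eq_branch_of_merge_branch_eq_some h
    have hAD := hm.merge_branch_eq_right_iff.1 hAD
    have hBD := hm.merge_branch_eq_right_iff.1 hBD
    exact hm.merge_branch_eq_right_iff.2 fun l =>
      Option.pmerge_lub (fun a ha _ _ _ _ => ih l a ha) (hAD l) (hBD l)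

end IsMerge
end BT

open Classical in
theorem merge_partial_order_and_join {C L : Type}
    (merge : BT C L → BT C L → Option (BT C L))
    (h_node : ∀ (c c' : C) (ts ts' : List (BT C L)) (r : BT C L),
      merge (.node c ts) (.node c' ts') = some r ↔
        (c = c' ∧ ∃ us : List (BT C L), r = .node c us ∧
          us.length = ts.length ∧ ts'.length = ts.length ∧
          ∀ (i : ℕ) (h1 : i < ts.length) (h2 : i < ts'.length) (h3 : i < us.length),
            merge (ts.get ⟨i, h1⟩) (ts'.get ⟨i, h2⟩) = some (us.get ⟨i, h3⟩)))
    (h_mixed : ∀ (c : C) (ts : List (BT C L)) (f : L → Option (BT C L)),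
      merge (.node c ts) (.branch f) = none ∧ merge (.branch f) (.node c ts) = none)
    (h_branch : ∀ f g : L → Option (BT C L),
      merge (.branch f) (.branch g) =
        if ∀ (l : L) (a b : BT C L), f l = some a → g l = some b → (merge a b).isSome = true
        then some (.branch (fun l =>
          match f l, g l with
          | some a, some b => merge a b
          | some a, none => some a
          | none, some b => some b
          | none, none => none))
        else none)
    -- branch-inclusion preorder: B ⊑ B' iff merge B B' is defined and equals B'
    (le : BT C L → BT C L → Prop)
    (hle : ∀ A B : BT C L, le A B ↔ merge A B = some B) :
    (∀ B : BT C L, le B B) ∧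
    (∀ A B C' : BT C L, le A B → le B C' → le A C') ∧
    (∀ A B : BT C L, le A B → le B A → A = B) ∧
    (∀ A B J : BT C L, merge A B = some J →
      le A J ∧ le B J ∧ ∀ D : BT C L, le A D → le B D → le J D) := by
  have hm : BT.IsMerge merge :=
    ⟨h_node, fun c ts f => (h_mixed c ts f).1, fun c ts f => (h_mixed c ts f).2,
      fun f g => by rw [h_branch]; congr 3; funext l; cases f l <;> cases g l <;> rfl⟩
  simp only [hle]
  refine ⟨hm.merge_self, fun _ _ _ => hm.merge_trans, fun _ _ => hm.eq_of_merge_eq_right,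
    fun _ _ _ hJ => ?_⟩
  obtain ⟨hAJ, hBJ⟩ := hm.merge_left_and_right_eq_of_merge_eq_some hJ
  exact ⟨hAJ, hBJ, fun _ => hm.merge_eq_right_of_merge_eq_some hJ⟩
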